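/- arXiv:2409.18625 — 2 statements merged into one kernel-verified Lean document; each statement's English description precedes it below -/
import Mathlib

section
/- For every t > 0, ∫ₜ^∞ [ (1 − e^{−y})e^{−y} + e^{−y}(1 − e^{−t})² ] / [ e^{−t}(1 − e^{−y})(2 − e^{−t}) ] dy = 1/(2 − e^{−t}) − ((1 − e^{−t})² / (e^{−t}(2 − e^{−t}))) · log(1 − e^{−t}). -/
/-!
Writing `a = e^{-t}` and `u = e^{-y}`, the integrand is
`(u + (1 - a)² · u / (1 - u)) / (a (2 - a))`. The first term integrates to `e^{-t}`, and
`u / (1 - u)` is the derivative of `log (1 - e^{-y})`, which tends to `0` at infinity, so the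
second term integrates to `-(1 - a)² log (1 - a)`.
-/

open MeasureTheory Real Set Filter Topology

lemma hasDerivAt_log_one_sub_exp_neg {y : ℝ} (hy : y ≠ 0) :
    HasDerivAt (fun y => log (1 - exp (-y))) (exp (-y) / (1 - exp (-y))) y := by
  have hne : 1 - exp (-y) ≠ 0 := by
    rw [sub_ne_zero, ne_comm, Ne, Real.exp_eq_one_iff, neg_eq_zero]
    exact hy
  have hsub : HasDerivAt (fun y => 1 - exp (-y)) (exp (-y)) y := by
    simpa using ((hasDerivAt_neg y).exp).const_sub 1
  exact hsub.log hne

lemma tendsto_log_one_sub_exp_neg_atTop :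
    Tendsto (fun y => log (1 - exp (-y))) atTop (𝓝 0) := by
  have hsub : Tendsto (fun y => 1 - exp (-y)) atTop (𝓝 1) := by
    simpa using tendsto_exp_neg_atTop_nhds_zero.const_sub 1
  simpa using hsub.log one_ne_zero

lemma exp_neg_div_one_sub_exp_neg_nonneg {y : ℝ} (hy : 0 < y) :
    0 ≤ exp (-y) / (1 - exp (-y)) :=
  div_nonneg (exp_pos _).le (sub_nonneg.mpr (exp_le_one_iff.mpr (by linarith)))

lemma integrableOn_exp_neg_div_one_sub_exp_neg_Ioi {t : ℝ} (ht : 0 < t) :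
    IntegrableOn (fun y => exp (-y) / (1 - exp (-y))) (Ioi t) :=
  integrableOn_Ioi_deriv_of_nonneg'
    (fun _ hy => hasDerivAt_log_one_sub_exp_neg (ht.trans_le hy).ne')
    (fun _ hy => exp_neg_div_one_sub_exp_neg_nonneg (ht.trans hy))
    tendsto_log_one_sub_exp_neg_atTop

lemma integral_exp_neg_div_one_sub_exp_neg_Ioi {t : ℝ} (ht : 0 < t) :
    ∫ y in Ioi t, exp (-y) / (1 - exp (-y)) = -log (1 - exp (-t)) := by
  rw [integral_Ioi_of_hasDerivAt_of_nonneg'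
    (fun _ hy => hasDerivAt_log_one_sub_exp_neg (ht.trans_le hy).ne')
    (fun _ hy => exp_neg_div_one_sub_exp_neg_nonneg (ht.trans hy))
    tendsto_log_one_sub_exp_neg_atTop, zero_sub]

/-- The integral giving the mean regression curve `E(T | T₁ = t) − t` for the system
`T = max(X₁, min(X₂, X₃))` with standard exponential components coupled (components 2, 3)
by a Clayton survival copula with `θ = 1`. -/
theorem mean_regression_integral_clayton (t : ℝ) (ht : 0 < t) :
    (∫ y in Set.Ioi t,
        ((1 - Real.exp (-y)) * Real.exp (-y) + Real.exp (-y) * (1 - Real.exp (-t)) ^ 2) /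
          (Real.exp (-t) * (1 - Real.exp (-y)) * (2 - Real.exp (-t)))) =
      1 / (2 - Real.exp (-t)) -
        ((1 - Real.exp (-t)) ^ 2 / (Real.exp (-t) * (2 - Real.exp (-t)))) *
          Real.log (1 - Real.exp (-t)) := by
  set a := exp (-t)
  have ha : 0 < a := exp_pos _
  have ha1 : a < 1 := exp_lt_one_iff.mpr (by linarith)
  have h2a : 2 - a ≠ 0 := by linarith
  have hsplit : EqOn
      (fun y => ((1 - exp (-y)) * exp (-y) + exp (-y) * (1 - a) ^ 2) /
        (a * (1 - exp (-y)) * (2 - a)))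
      (fun y => (a * (2 - a))⁻¹ * exp (-y) +
        (a * (2 - a))⁻¹ * (1 - a) ^ 2 * (exp (-y) / (1 - exp (-y)))) (Ioi t) := by
    intro y hy
    have hu : 1 - exp (-y) ≠ 0 :=
      (sub_pos.mpr (exp_lt_one_iff.mpr (neg_lt_zero.mpr (ht.trans hy)))).ne'
    field_simp
  rw [setIntegral_congr_fun measurableSet_Ioi hsplit, integral_add
      ((integrableOn_exp_neg_Ioi t).const_mul _)
      ((integrableOn_exp_neg_div_one_sub_exp_neg_Ioi ht).const_mul _),
    integral_const_mul, integral_const_mul, integral_exp_neg_Ioi,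
    integral_exp_neg_div_one_sub_exp_neg_Ioi ht]
  field_simp
  ring
end

section
/- Let X₁, X₂, X₃ be independent and identically distributed nonnegative real-valued random variables with common survival function F̄(t) = P(Xᵢ > t), let T = min(X₁, max(X₂, X₃)) and T₁ = min(X₁, X₂, X₃). Then for all 0 ≤ x < y, P(T₁ > x and T > y) = 2F̄(x)F̄(y)² − F̄(y)³, and for all 0 ≤ y ≤ x, P(T₁ > x and T > y) = F̄(x)³. -/
/-!
For `x < y` the event `{T₁ > x, T > y}` is the union of `{X₁ > y, X₂ > y, X₃ > x}` and
`{X₁ > y, X₂ > x, X₃ > y}`, whose intersection is `{X₁, X₂, X₃ > y}`; inclusion–exclusion and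
independence give `2 F̄(x) F̄(y)² - F̄(y)³`. For `y ≤ x` the event is just `{X₁, X₂, X₃ > x}`.
-/

open MeasureTheory ProbabilityTheory

section Order

variable {α : Type*} [LinearOrder α] {a b c x y : α}

lemma lt_min_min_and_lt_min_max_iff_of_lt (hxy : x < y) :
    x < min a (min b c) ∧ y < min a (max b c) ↔
      (y < a ∧ y < b ∧ x < c) ∨ (y < a ∧ x < b ∧ y < c) := by
  simp only [lt_min_iff, lt_max_iff]
  grind

lemma lt_min_min_and_lt_min_max_iff_of_le (hyx : y ≤ x) :
    x < min a (min b c) ∧ y < min a (max b c) ↔ x < a ∧ x < b ∧ x < c := by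
  simp only [lt_min_iff, lt_max_iff]
  grind

end Order

section UpperOrthant

variable {ι Ω β : Type*} [LinearOrder β]

lemma setOf_forall_lt_inter_setOf_forall_lt (X : ι → Ω → β) (a b : ι → β) :
    {ω | ∀ i, a i < X i ω} ∩ {ω | ∀ i, b i < X i ω} = {ω | ∀ i, max (a i) (b i) < X i ω} := by
  ext ω
  simp only [Set.mem_inter_iff, Set.mem_ofPred_eq, max_lt_iff, forall_and]

variable [MeasurableSpace Ω] [TopologicalSpace β] [OrderClosedTopology β] [MeasurableSpace β]
  [OpensMeasurableSpace β] {X : ι → Ω → β}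

lemma measurableSet_setOf_forall_lt [Countable ι] (hX : ∀ i, Measurable (X i)) (a : ι → β) :
    MeasurableSet {ω | ∀ i, a i < X i ω} := by
  rw [Set.ofPred_forall]
  exact MeasurableSet.iInter fun i => hX i measurableSet_Ioi

lemma ProbabilityTheory.iIndepFun.measureReal_setOf_forall_lt [Fintype ι] {μ : Measure Ω}
    (hX : iIndepFun X μ) (a : ι → β) :
    μ.real {ω | ∀ i, a i < X i ω} = ∏ i, μ.real {ω | a i < X i ω} := by
  have hset : {ω | ∀ i, a i < X i ω} = ⋂ i, X i ⁻¹' Set.Ioi (a i) := by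
    ext ω
    simp
  simp only [measureReal_def, hset, ENNReal.toReal_prod,
    hX.meas_iInter fun i => ⟨Set.Ioi (a i), measurableSet_Ioi, rfl⟩]
  rfl

end UpperOrthant

theorem joint_survival_first_failure_series_parallel_iid_general
    {Ω : Type*} [MeasureSpace Ω] [IsProbabilityMeasure (ℙ : Measure Ω)]
    (X : Fin 3 → Ω → ℝ) (hmeas : ∀ i, Measurable (X i))
    (hindep : iIndepFun (m := fun _ => Real.measurableSpace) X ℙ)
    (Fbar : ℝ → ℝ)
    (hF : ∀ i t, (ℙ {ω | t < X i ω}).toReal = Fbar t)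
    (T T₁ : Ω → ℝ)
    (hT : ∀ ω, T ω = min (X 0 ω) (max (X 1 ω) (X 2 ω)))
    (hT₁ : ∀ ω, T₁ ω = min (X 0 ω) (min (X 1 ω) (X 2 ω))) :
    (∀ x y : ℝ, 0 ≤ x → x < y →
        (ℙ {ω | x < T₁ ω ∧ y < T ω}).toReal =
          2 * Fbar x * (Fbar y) ^ 2 - (Fbar y) ^ 3) ∧
    (∀ x y : ℝ, 0 ≤ y → y ≤ x →
        (ℙ {ω | x < T₁ ω ∧ y < T ω}).toReal = (Fbar x) ^ 3) := by
  have hsurv (a : Fin 3 → ℝ) :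
      (ℙ : Measure Ω).real {ω | ∀ i, a i < X i ω} = Fbar (a 0) * Fbar (a 1) * Fbar (a 2) := by
    simp only [hindep.measureReal_setOf_forall_lt, Fin.prod_univ_three, measureReal_def, hF]
  simp only [← measureReal_def]
  refine ⟨fun x y _ hxy => ?_, fun x y _ hyx => ?_⟩
  · have hunion : {ω | x < T₁ ω ∧ y < T ω} =
        {ω | ∀ i, ![y, y, x] i < X i ω} ∪ {ω | ∀ i, ![y, x, y] i < X i ω} := by
      ext ω
      rw [Set.mem_ofPred_eq, hT, hT₁, lt_min_min_and_lt_min_max_iff_of_lt hxy]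
      simp [Fin.forall_fin_succ]
    have hmax : ∀ i, max (![y, y, x] i) (![y, x, y] i) = y := by
      simp [Fin.forall_fin_succ, hxy.le]
    have h := measureReal_union_add_inter (μ := ℙ) (s := {ω | ∀ i, ![y, y, x] i < X i ω})
      (measurableSet_setOf_forall_lt hmeas ![y, x, y])
    simp only [setOf_forall_lt_inter_setOf_forall_lt, hmax, hsurv, Matrix.cons_val] at h
    rw [hunion]
    linear_combination h
  · have hevent : {ω | x < T₁ ω ∧ y < T ω} = {ω | ∀ i, x < X i ω} := by
      ext ω
      rw [Set.mem_ofPred_eq, hT, hT₁, lt_min_min_and_lt_min_max_iff_of_le hyx]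
      simp [Fin.forall_fin_succ]
    rw [hevent, hsurv fun _ => x]
    ring

/-- Joint survival function of `(T₁, T)` where `T₁ = min(X₁,X₂,X₃)` and
`T = min(X₁, max(X₂,X₃))`, for IID nonnegative components with common survival
function `F̄`. -/
theorem joint_survival_first_failure_series_parallel_iid
    {Ω : Type*} [MeasureSpace Ω] [IsProbabilityMeasure (ℙ : Measure Ω)]
    (X : Fin 3 → Ω → ℝ) (hmeas : ∀ i, Measurable (X i))
    (hnonneg : ∀ i ω, 0 ≤ X i ω)
    (hindep : iIndepFun (m := fun _ => Real.measurableSpace) X ℙ)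
    (Fbar : ℝ → ℝ)
    (hF : ∀ i t, (ℙ {ω | t < X i ω}).toReal = Fbar t)
    (T T₁ : Ω → ℝ)
    (hT : ∀ ω, T ω = min (X 0 ω) (max (X 1 ω) (X 2 ω)))
    (hT₁ : ∀ ω, T₁ ω = min (X 0 ω) (min (X 1 ω) (X 2 ω))) :
    (∀ x y : ℝ, 0 ≤ x → x < y →
        (ℙ {ω | x < T₁ ω ∧ y < T ω}).toReal =
          2 * Fbar x * (Fbar y) ^ 2 - (Fbar y) ^ 3) ∧
    (∀ x y : ℝ, 0 ≤ y → y ≤ x →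
        (ℙ {ω | x < T₁ ω ∧ y < T ω}).toReal = (Fbar x) ^ 3) :=
  joint_survival_first_failure_series_parallel_iid_general X hmeas hindep Fbar hF T T₁ hT hT₁
end
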